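/- arXiv:2512.08357 — 6 statements merged into one kernel-verified Lean document; each statement's English description precedes it below -/
import Mathlib

section
/- For all integers n, m, d ≥ 1 the following identities hold in 𝒢: (1) T_n · T_m = T_{lcm(n,m)}; (2) m_d(T_n) = T_{n/gcd(d,n)}; (3) d_{1/d}(T_n) = T_{n·d}. In particular each T_n is idempotent. -/
noncomputable section

/-- `G = (ℝ/ℤ)^r`. -/
abbrev Gr (r : ℕ) : Type := Fin r → AddCircle (1 : ℝ)

/-- The group algebra `𝒢 = ℚ[G]`. -/
abbrev GA (r : ℕ) : Type := AddMonoidAlgebra ℚ (Gr r)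

/-- The multiplication operator `m_d`, the ℚ-linear operator determined by
`m_d((θ)) = (d • θ)`. -/
noncomputable def mulOp (r : ℕ) (d : ℤ) : GA r →ₗ[ℚ] GA r :=
  AddMonoidAlgebra.mapDomainLinearMap ℚ ℚ (fun θ : Gr r => d • θ)

/-- The division operator `d_{1/d}`, the ℚ-linear operator determined by
`d_{1/d}((θ)) = d^{-r} • ∑_{τ : d • τ = θ} (τ)`. -/
noncomputable def divOp (r d : ℕ) : GA r →ₗ[ℚ] GA r :=
  (Finsupp.lsum ℚ fun θ : Gr r =>
    LinearMap.toSpanSingleton ℚ (GA r)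
      (((d : ℚ) ^ r)⁻¹ • ∑ᶠ τ ∈ {τ : Gr r | d • τ = θ}, AddMonoidAlgebra.single τ (1 : ℚ))) ∘ₗ
    (AddMonoidAlgebra.coeffLinearEquiv ℚ).toLinearMap

/-- `T_n := d_{1/n}((0))`, the average of the `n`-torsion elements of `G`. -/
noncomputable def Tor (r n : ℕ) : GA r := divOp r n (AddMonoidAlgebra.single 0 1)

/-! The element `T_n` is the normalized Haar idempotent `e_H = |H|⁻¹ ∑_{h ∈ H} (h)` of the finite
subgroup `H = G[n]` of `n`-torsion points, and `e_H` is the only element of `𝒢` that is supported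
on `H`, is fixed by multiplication with `(h)` for every `h ∈ H`, and has augmentation `1`. Each
operation in the theorem visibly preserves these three properties for a suitable subgroup:
`e_H e_K` is the idempotent of `H ⊔ K`, `m_d(e_H)` that of `d • H`, and `d_{1/d}(e_H)`, whose
coefficient at `τ` is `d^{-r}` times that of `e_H` at `d • τ`, that of the preimage of `H` under
`d •` (augmentation is preserved because every fibre of `d •` has `d^r` points). What is left is
arithmetic of torsion subgroups: `G[n] ⊔ G[m] = G[lcm n m]` by Bézout, `d • G[n] = G[n / gcd d n]`
by divisibility of `G`, and `(d •)⁻¹ G[n] = G[n d]`. -/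

open AddMonoidAlgebra AddSubgroup

namespace AddMonoidAlgebra

section Augmentation

variable {k A B : Type*} [CommSemiring k]

lemma coeff_finsum_mem_single_one {s : Set A} (hs : s.Finite) (a : A) :
    (∑ᶠ x ∈ s, single x (1 : k)).coeff a = s.indicator 1 a := by
  classical
  rw [finsum_mem_eq_finite_toFinset_sum _ hs, coeff_sum, Finsupp.finsetSum_apply]
  simp [Finsupp.single_apply, Set.indicator_apply]

variable [AddMonoid A] [AddMonoid B]

def augmentation : k[A] →ₐ[k] k := lift k k A 1

@[simp]
lemma augmentation_single (a : A) (c : k) : augmentation (single a c) = c := by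
  simp [augmentation]

lemma augmentation_finsum_mem_single_one {s : Set A} (hs : s.Finite) :
    augmentation (∑ᶠ x ∈ s, single x (1 : k)) = s.ncard := by
  rw [finsum_mem_eq_finite_toFinset_sum _ hs, map_sum]
  simp [Set.ncard_eq_toFinset_card _ hs]

lemma augmentation_mapDomain (φ : A →+ B) (x : k[A]) :
    augmentation (mapDomain φ x) = augmentation x := by
  induction x using induction_linear with
  | zero => simp
  | add x y hx hy => rw [mapDomain_add, map_add, map_add, hx, hy]
  | single a c => simp

end Augmentation

section Average

variable {k A B : Type*} [Field k] [AddCommGroup A] [AddCommGroup B] {H K : AddSubgroup A}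

def average (H : AddSubgroup A) : k[A] :=
  (Nat.card H : k)⁻¹ • ∑ᶠ h ∈ (H : Set A), single h 1

lemma average_bot : (average (⊥ : AddSubgroup A) : k[A]) = single 0 1 := by
  simp [average]

lemma coeff_average [Finite H] (a : A) :
    (average H : k[A]).coeff a = (H : Set A).indicator (fun _ => (Nat.card H : k)⁻¹) a := by
  rw [average, coeff_smul, Finsupp.smul_apply, coeff_finsum_mem_single_one (H : Set A).toFinite]
  by_cases ha : a ∈ H <;> simp [ha]

lemma mem_of_coeff_average_ne_zero [Finite H] {a : A} (ha : (average H : k[A]).coeff a ≠ 0) :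
    a ∈ H := by
  rw [coeff_average] at ha
  exact Set.mem_of_indicator_ne_zero ha

lemma augmentation_average [CharZero k] [Finite H] : augmentation (average H : k[A]) = 1 := by
  rw [average, map_smul, augmentation_finsum_mem_single_one (H : Set A).toFinite,
    ← Nat.card_coe_set_eq, SetLike.coe_sort_coe, smul_eq_mul,
    inv_mul_cancel₀ (mod_cast Nat.card_pos.ne')]

lemma single_mul_average [Finite H] {h : A} (hh : h ∈ H) :
    single h 1 * (average H : k[A]) = average H := by
  ext a
  rw [coeff_single_mul_apply, one_mul, coeff_average, coeff_average]
  by_cases ha : a ∈ H <;> simp [ha, H.add_mem_cancel_left (H.neg_mem hh)]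

theorem eq_average_of_invariant [CharZero k] [Finite H] {x : k[A]}
    (hsupp : ∀ a ∉ H, x.coeff a = 0) (hinv : ∀ h ∈ H, single h 1 * x = x)
    (hmass : augmentation x = 1) : x = average H := by
  have hconst : ∀ h ∈ H, x.coeff h = x.coeff 0 := fun h hh => by
    simpa using congrArg (fun y => y.coeff h) (hinv h hh).symm
  have hx : x = x.coeff 0 • ∑ᶠ h ∈ (H : Set A), single h 1 := by
    ext a
    rw [coeff_smul, Finsupp.smul_apply, coeff_finsum_mem_single_one (H : Set A).toFinite]
    by_cases ha : a ∈ H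
    · simp [ha, hconst a ha]
    · simp [ha, hsupp a ha]
  rw [hx, map_smul, augmentation_finsum_mem_single_one (H : Set A).toFinite,
    ← Nat.card_coe_set_eq, SetLike.coe_sort_coe, smul_eq_mul] at hmass
  rw [hx, eq_inv_of_mul_eq_one_left hmass, average]

theorem average_mul_average [CharZero k] [Finite H] [Finite K] :
    (average H * average K : k[A]) = average (H ⊔ K) := by
  classical
  have : Finite ↥(H ⊔ K) := by
    rw [← SetLike.coe_sort_coe, add_normal]
    exact ((H : Set A).toFinite.add (K : Set A).toFinite).to_subtype
  refine eq_average_of_invariant (fun a ha => ?_) (fun s hs => ?_) (by simp [augmentation_average])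
  · by_contra hne
    obtain ⟨b, hb, c, hc, rfl⟩ :=
      Finset.mem_add.mp (support_coeff_mul_subset _ _ (Finsupp.mem_support_iff.mpr hne))
    exact ha (add_mem_sup (mem_of_coeff_average_ne_zero (Finsupp.mem_support_iff.mp hb))
      (mem_of_coeff_average_ne_zero (Finsupp.mem_support_iff.mp hc)))
  · obtain ⟨h, hh, h', hh', rfl⟩ := mem_sup.mp hs
    rw [← mul_one (1 : k), ← single_mul_single, mul_mul_mul_comm, single_mul_average hh,
      single_mul_average hh']

theorem mapDomain_average [CharZero k] (φ : A →+ B) [Finite H] :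
    mapDomain φ (average H : k[A]) = average (H.map φ) := by
  classical
  have : Finite ↥(H.map φ) := by
    rw [← SetLike.coe_sort_coe, coe_map]
    exact ((H : Set A).toFinite.image φ).to_subtype
  refine eq_average_of_invariant (fun b hb => ?_) (fun s hs => ?_)
    (by rw [augmentation_mapDomain, augmentation_average])
  · by_contra hne
    obtain ⟨a, ha, rfl⟩ :=
      Finset.mem_image.mp (Finsupp.mapDomain_support (Finsupp.mem_support_iff.mpr hne))
    exact hb (mem_map_of_mem φ (mem_of_coeff_average_ne_zero (Finsupp.mem_support_iff.mp ha)))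
  · obtain ⟨h, hh, rfl⟩ := mem_map.mp hs
    have := map_mul (mapDomainRingHom k φ) (single h 1) (average H)
    rw [mapDomainRingHom_apply, mapDomainRingHom_apply, mapDomain_single,
      single_mul_average hh] at this
    exact this.symm

end Average

end AddMonoidAlgebra

namespace AddSubgroup

variable {A : Type*} [AddCommGroup A]

lemma mem_torsionBy_natCast_iff_zsmul {n : ℕ} {x : A} : x ∈ torsionBy A n ↔ (n : ℤ) • x = 0 :=
  Iff.rfl

lemma ker_nsmulAddMonoidHom (n : ℕ) : (nsmulAddMonoidHom n : A →+ A).ker = torsionBy A n := by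
  ext x
  rw [AddMonoidHom.mem_ker, nsmulAddMonoidHom_apply, torsionBy.nsmul_iff]

lemma torsionBy_mono {n m : ℕ} (h : n ∣ m) : torsionBy A n ≤ torsionBy A m := fun x hx => by
  obtain ⟨c, rfl⟩ := h
  rw [torsionBy.nsmul_iff] at hx ⊢
  rw [mul_nsmul, hx, nsmul_zero]

theorem comap_nsmul_torsionBy (d n : ℕ) :
    (torsionBy A n).comap (nsmulAddMonoidHom d) = torsionBy A (n * d : ℕ) := by
  ext x
  rw [mem_comap, torsionBy.nsmul_iff, torsionBy.nsmul_iff, nsmulAddMonoidHom_apply, mul_nsmul']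

theorem torsionBy_sup_torsionBy (n m : ℕ) :
    torsionBy A n ⊔ torsionBy A m = torsionBy A (Nat.lcm n m) := by
  refine le_antisymm (sup_le (torsionBy_mono (Nat.dvd_lcm_left n m))
    (torsionBy_mono (Nat.dvd_lcm_right n m))) fun x hx => ?_
  obtain rfl | hn := n.eq_zero_or_pos
  · exact mem_sup_left (by simp)
  obtain ⟨g, n', m', hg, hcop, rfl, rfl⟩ := Nat.exists_coprime' (Nat.gcd_pos_of_pos_left m hn)
  obtain ⟨a, b, hab⟩ := Nat.isCoprime_iff_coprime.mpr hcop
  rw [Nat.lcm_mul_right, hcop.lcm_eq_mul, mem_torsionBy_natCast_iff_zsmul] at hx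
  refine mem_sup.mpr ⟨(b * m') • x, ?_, (a * n') • x, ?_, ?_⟩
  · rw [mem_torsionBy_natCast_iff_zsmul, smul_smul,
      show ((n' * g : ℕ) : ℤ) * (b * m') = b * ((n' * m' * g : ℕ) : ℤ) by push_cast; ring,
      mul_smul, hx, smul_zero]
  · rw [mem_torsionBy_natCast_iff_zsmul, smul_smul,
      show ((m' * g : ℕ) : ℤ) * (a * n') = a * ((n' * m' * g : ℕ) : ℤ) by push_cast; ring,
      mul_smul, hx, smul_zero]
  · rw [← add_smul, add_comm, hab, one_smul]

theorem map_zsmul_torsionBy [DivisibleBy A ℤ] {d : ℕ} (hd : d ≠ 0) (n : ℕ) :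
    (torsionBy A n).map (zsmulAddGroupHom (d : ℤ)) = torsionBy A (n / Nat.gcd d n : ℕ) := by
  obtain ⟨g, d', n', hg, hcop, rfl, rfl⟩ :=
    Nat.exists_coprime' (Nat.gcd_pos_of_pos_left n (Nat.pos_of_ne_zero hd))
  rw [Nat.gcd_mul_right, hcop, one_mul, Nat.mul_div_cancel _ hg]
  refine le_antisymm ?_ fun y hy => ?_
  · rintro _ ⟨θ, hθ, rfl⟩
    rw [SetLike.mem_coe, mem_torsionBy_natCast_iff_zsmul] at hθ
    rw [mem_torsionBy_natCast_iff_zsmul, zsmulAddGroupHom_apply, smul_smul,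
      show (n' : ℤ) * ((d' * g : ℕ) : ℤ) = d' * ((n' * g : ℕ) : ℤ) by push_cast; ring,
      mul_smul, hθ, smul_zero]
  · set θ₁ := DivisibleBy.div y ((d' * g : ℕ) : ℤ)
    have hθ₁ : ((d' * g : ℕ) : ℤ) • θ₁ = y := DivisibleBy.div_cancel y (mod_cast hd)
    -- a `d`-th root of `y` is `lcm d n`-torsion, hence a `d`-torsion point plus an `n`-torsion one
    have : θ₁ ∈ torsionBy A (d' * g : ℕ) ⊔ torsionBy A (n' * g : ℕ) := by
      rw [torsionBy_sup_torsionBy, Nat.lcm_mul_right, hcop.lcm_eq_mul,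
        mem_torsionBy_natCast_iff_zsmul,
        show ((d' * n' * g : ℕ) : ℤ) = n' * ((d' * g : ℕ) : ℤ) by push_cast; ring, mul_smul, hθ₁]
      exact hy
    obtain ⟨σ, hσ, θ, hθ, hσθ⟩ := mem_sup.mp this
    refine ⟨θ, hθ, ?_⟩
    rw [← hθ₁, ← hσθ, zsmulAddGroupHom_apply, smul_add, mem_torsionBy_natCast_iff_zsmul.mp hσ,
      zero_add]

lemma setOf_nsmul_eq_eq_image {d : ℕ} {ρ θ : A} (hρ : d • ρ = θ) :
    {τ : A | d • τ = θ} = (ρ + ·) '' torsionBy A d := by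
  ext τ
  refine ⟨fun h => ⟨-ρ + τ, ?_, add_neg_cancel_left ρ τ⟩, ?_⟩
  · rw [SetLike.mem_coe, torsionBy.nsmul_iff, smul_add, h, ← hρ, smul_neg, neg_add_cancel]
  · rintro ⟨σ, hσ, rfl⟩
    rw [Set.mem_ofPred_eq, smul_add, hρ, torsionBy.nsmul_iff.mp hσ, add_zero]

end AddSubgroup

lemma UnitAddCircle.torsionBy_eq_range (n : ℕ) [NeZero n] :
    torsionBy UnitAddCircle n = (ZMod.toAddCircle (N := n)).range := by
  ext u
  rw [torsionBy.nsmul_iff, AddMonoidHom.mem_range]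
  constructor
  · intro hu
    obtain ⟨m, -, rfl⟩ := (AddCircle.nsmul_eq_zero_iff (NeZero.pos n)).mp hu
    exact ⟨m, by rw [ZMod.toAddCircle_natCast, mul_one]⟩
  · rintro ⟨j, rfl⟩
    rw [← map_nsmul, nsmul_eq_mul, ZMod.natCast_self, zero_mul, map_zero]

lemma UnitAddCircle.card_torsionBy (n : ℕ) [NeZero n] :
    Nat.card (torsionBy UnitAddCircle n) = n := by
  rw [torsionBy_eq_range,
    ← Nat.card_congr (AddMonoidHom.ofInjective (ZMod.toAddCircle_injective n)).toEquiv,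
    Nat.card_zmod]

namespace UnitAddTorus

variable {ι : Type*} [Finite ι] (d : ℕ) [NeZero d]

lemma card_torsionBy : Nat.card (torsionBy (UnitAddTorus ι) d) = d ^ Nat.card ι := by
  have e : torsionBy (UnitAddTorus ι) d ≃ (ι → torsionBy UnitAddCircle d) :=
    (Equiv.subtypeEquivRight fun x => by simp [funext_iff]).trans
      (Equiv.subtypePiEquivPi (p := fun _ u => u ∈ torsionBy UnitAddCircle d))
  rw [Nat.card_congr e, Nat.card_fun, UnitAddCircle.card_torsionBy]

instance : Finite (torsionBy (UnitAddTorus ι) d) :=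
  Nat.finite_of_card_ne_zero (by rw [card_torsionBy]; exact pow_ne_zero _ (NeZero.ne d))

lemma ncard_setOf_nsmul_eq (θ : UnitAddTorus ι) :
    {τ : UnitAddTorus ι | d • τ = θ}.ncard = d ^ Nat.card ι := by
  obtain ⟨ρ, hρ⟩ : ∃ ρ : UnitAddTorus ι, d • ρ = θ :=
    ⟨DivisibleBy.div θ (d : ℤ),
      by rw [← natCast_zsmul, DivisibleBy.div_cancel θ (mod_cast NeZero.ne d)]⟩
  rw [setOf_nsmul_eq_eq_image hρ, Set.ncard_image_of_injective _ (add_right_injective ρ),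
    ← Nat.card_coe_set_eq, SetLike.coe_sort_coe, card_torsionBy]

lemma finite_setOf_nsmul_eq (θ : UnitAddTorus ι) : {τ : UnitAddTorus ι | d • τ = θ}.Finite :=
  Set.finite_of_ncard_ne_zero (by rw [ncard_setOf_nsmul_eq]; exact pow_ne_zero _ (NeZero.ne d))

end UnitAddTorus

section DivOp

variable {r d : ℕ}

lemma divOp_single (θ : Gr r) (c : ℚ) :
    divOp r d (single θ c) = c • ((d : ℚ) ^ r)⁻¹ • ∑ᶠ τ ∈ {τ : Gr r | d • τ = θ}, single τ 1 := by
  simp [divOp]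

lemma coeff_divOp [NeZero d] (x : GA r) (τ : Gr r) :
    (divOp r d x).coeff τ = ((d : ℚ) ^ r)⁻¹ * x.coeff (d • τ) := by
  induction x using induction_linear with
  | zero => simp
  | add x y hx hy =>
    rw [map_add, coeff_add, coeff_add, Finsupp.add_apply, Finsupp.add_apply, hx, hy, mul_add]
  | single θ c =>
    rw [divOp_single, coeff_smul, coeff_smul, Finsupp.smul_apply, Finsupp.smul_apply,
      coeff_finsum_mem_single_one (UnitAddTorus.finite_setOf_nsmul_eq d θ), coeff_single,
      Finsupp.single_apply]
    by_cases h : d • τ = θ <;> simp [h, Ne.symm, mul_comm]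

lemma augmentation_divOp [NeZero d] (x : GA r) : augmentation (divOp r d x) = augmentation x := by
  induction x using induction_linear with
  | zero => simp
  | add x y hx hy => rw [map_add, map_add, map_add, hx, hy]
  | single θ c =>
    rw [divOp_single, map_smul, map_smul,
      augmentation_finsum_mem_single_one (UnitAddTorus.finite_setOf_nsmul_eq d θ),
      UnitAddTorus.ncard_setOf_nsmul_eq, Nat.card_fin, augmentation_single]
    simp [NeZero.ne d]

lemma single_mul_divOp [NeZero d] (σ : Gr r) (x : GA r) :
    single σ 1 * divOp r d x = divOp r d (single (d • σ) 1 * x) := by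
  ext τ
  rw [coeff_single_mul_apply, coeff_divOp, coeff_divOp, coeff_single_mul_apply, smul_add,
    smul_neg, one_mul, one_mul]

theorem divOp_average [NeZero d] (H : AddSubgroup (Gr r)) [Finite H] :
    divOp r d (average H) = average (H.comap (nsmulAddMonoidHom d)) := by
  have : Finite (H.comap (nsmulAddMonoidHom d)) :=
    ((H : Set (Gr r)).toFinite.preimage' fun θ _ =>
      UnitAddTorus.finite_setOf_nsmul_eq d θ).to_subtype
  refine eq_average_of_invariant (fun τ hτ => ?_) (fun σ hσ => ?_)
    (by rw [augmentation_divOp, augmentation_average])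
  · rw [coeff_divOp, coeff_average,
      Set.indicator_of_notMem (show d • τ ∉ (H : Set (Gr r)) from hτ), mul_zero]
  · rw [single_mul_divOp, single_mul_average (show d • σ ∈ H from hσ)]

lemma mulOp_apply (d : ℤ) (x : GA r) : mulOp r d x = mapDomain (zsmulAddGroupHom d) x :=
  rfl

lemma tor_eq_average (n : ℕ) [NeZero n] : Tor r n = average (torsionBy (Gr r) n) := by
  rw [Tor, ← average_bot, divOp_average, AddMonoidHom.comap_bot, ker_nsmulAddMonoidHom]

lemma tor_mul_tor (n m : ℕ) [NeZero n] [NeZero m] : Tor r n * Tor r m = Tor r (Nat.lcm n m) := by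
  have : NeZero (Nat.lcm n m) := ⟨Nat.lcm_ne_zero (NeZero.ne n) (NeZero.ne m)⟩
  rw [tor_eq_average, tor_eq_average, tor_eq_average, average_mul_average,
    torsionBy_sup_torsionBy]

lemma mulOp_tor (d n : ℕ) [NeZero d] [NeZero n] :
    mulOp r d (Tor r n) = Tor r (n / Nat.gcd d n) := by
  have : NeZero (n / Nat.gcd d n) := ⟨(Nat.div_pos (Nat.gcd_le_right (m := d) (NeZero.pos n))
    (Nat.gcd_pos_of_pos_right d (NeZero.pos n))).ne'⟩
  rw [tor_eq_average, tor_eq_average, mulOp_apply, mapDomain_average,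
    map_zsmul_torsionBy (NeZero.ne d)]

lemma divOp_tor (d n : ℕ) [NeZero d] [NeZero n] : divOp r d (Tor r n) = Tor r (n * d) := by
  rw [tor_eq_average, tor_eq_average, divOp_average, comap_nsmul_torsionBy]

end DivOp

theorem statement1_general (r : ℕ) (n m d : ℕ)
    (hn : 1 ≤ n) (hm : 1 ≤ m) (hd : 1 ≤ d) :
    Tor r n * Tor r m = Tor r (Nat.lcm n m) ∧
    mulOp r (d : ℤ) (Tor r n) = Tor r (n / Nat.gcd d n) ∧
    divOp r d (Tor r n) = Tor r (n * d) ∧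
    Tor r n * Tor r n = Tor r n := by
  have : NeZero n := NeZero.of_pos hn
  have : NeZero m := NeZero.of_pos hm
  have : NeZero d := NeZero.of_pos hd
  refine ⟨tor_mul_tor n m, mulOp_tor d n, divOp_tor d n, ?_⟩
  rw [tor_mul_tor, Nat.lcm_self]

/-- (1) `T_n · T_m = T_{lcm(n,m)}`; (2) `m_d(T_n) = T_{n/gcd(d,n)}`;
(3) `d_{1/d}(T_n) = T_{n·d}`. In particular each `T_n` is idempotent. -/
theorem statement1 (r : ℕ) (hr : 1 ≤ r) (n m d : ℕ)
    (hn : 1 ≤ n) (hm : 1 ≤ m) (hd : 1 ≤ d) :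
    Tor r n * Tor r m = Tor r (Nat.lcm n m) ∧
    mulOp r (d : ℤ) (Tor r n) = Tor r (n / Nat.gcd d n) ∧
    divOp r d (Tor r n) = Tor r (n * d) ∧
    Tor r n * Tor r n = Tor r n :=
  statement1_general r n m d hn hm hd

end
end

section
/- SL₂(ℤ) acts transitively on the elements of Z_n² of a given additive order: for every n ≥ 1 and all x, y ∈ Z_n² with addOrderOf x = addOrderOf y, there exists A ∈ SL₂(ℤ) such that A · x = y. -/
/-!
If `g = gcd(a, b) > 0`, `a = a' g`, `b = b' g` and `u a' + v b' = 1`, then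
`[[u, v], [-b', a']] ∈ SL₂(ℤ)` sends `(a, b)` to `(g, 0)`. Lifting `x ∈ Z_n²` to `(a, b) ∈ ℤ²`,
this moves `x` to `(g, 0) = (g, n)`, and a second such step moves it to `(gcd(g, n), 0)`.
So every orbit contains some `(d, 0)` with `d ∣ n`. The action is by additive automorphisms, so it
preserves additive order, and `(d, 0)` has order `n / d`, which determines `d`.
-/

/-- The action of a matrix `A ∈ SL₂(ℤ)` on `Z_n² = ZMod n × ZMod n`, given by
reducing the matrix modulo `n` and multiplying vectors. -/
def sl2Hom (n : ℕ) (A : Matrix.SpecialLinearGroup (Fin 2) ℤ) :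
    (ZMod n × ZMod n) →+ (ZMod n × ZMod n) where
  toFun x := (((A.1 0 0 : ℤ) : ZMod n) * x.1 + ((A.1 0 1 : ℤ) : ZMod n) * x.2,
              ((A.1 1 0 : ℤ) : ZMod n) * x.1 + ((A.1 1 1 : ℤ) : ZMod n) * x.2)
  map_zero' := by simp
  map_add' x y := by
    simp only [Prod.fst_add, Prod.snd_add, Prod.mk_add_mk, Prod.mk.injEq]
    constructor <;> ring

open scoped MatrixGroups

lemma sl2Hom_apply_intCast (n : ℕ) (A : SL(2, ℤ)) (a b : ℤ) :
    sl2Hom n A ((a : ZMod n), (b : ZMod n)) =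
      (((A 0 0 * a + A 0 1 * b : ℤ) : ZMod n), ((A 1 0 * a + A 1 1 * b : ℤ) : ZMod n)) := by
  simp [sl2Hom]

lemma sl2Hom_mul (n : ℕ) (A B : SL(2, ℤ)) (v : ZMod n × ZMod n) :
    sl2Hom n (A * B) v = sl2Hom n A (sl2Hom n B v) := by
  simp only [sl2Hom, AddMonoidHom.coe_mk, ZeroHom.coe_mk, Matrix.SpecialLinearGroup.coe_mul,
    Matrix.mul_apply, Fin.sum_univ_two, Prod.mk.injEq]
  constructor <;> push_cast <;> ring

lemma sl2Hom_one (n : ℕ) (v : ZMod n × ZMod n) : sl2Hom n 1 v = v := by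
  simp [sl2Hom]

lemma sl2Hom_injective (n : ℕ) (A : SL(2, ℤ)) : Function.Injective (sl2Hom n A) :=
  Function.LeftInverse.injective (g := sl2Hom n A⁻¹) fun v => by
    rw [← sl2Hom_mul, inv_mul_cancel, sl2Hom_one]

lemma addOrderOf_sl2Hom (n : ℕ) (A : SL(2, ℤ)) (v : ZMod n × ZMod n) :
    addOrderOf (sl2Hom n A v) = addOrderOf v :=
  addOrderOf_injective _ (sl2Hom_injective n A) v

lemma Int.exists_SL2_apply_eq_gcd (a b : ℤ) :
    ∃ A : SL(2, ℤ), A 0 0 * a + A 0 1 * b = a.gcd b ∧ A 1 0 * a + A 1 1 * b = 0 := by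
  rcases (Nat.zero_le (a.gcd b)).eq_or_lt with hg | hg
  · obtain ⟨rfl, rfl⟩ := Int.gcd_eq_zero_iff.mp hg.symm
    exact ⟨1, by simp⟩
  obtain ⟨a', b', hab', ha, hb⟩ := Int.exists_gcd_one hg
  obtain ⟨u, v, huv⟩ := Int.isCoprime_iff_gcd_eq_one.mpr hab'
  refine ⟨⟨!![u, v; -b', a'], by simpa [Matrix.det_fin_two_of] using huv⟩, ?_, ?_⟩ <;>
    simp only [Matrix.of_apply, Matrix.cons_val', Matrix.cons_val_zero, Matrix.cons_val_fin_one,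
      Matrix.cons_val_one]
  · linear_combination (a.gcd b : ℤ) * huv + u * ha + v * hb
  · linear_combination -b' * ha + a' * hb

lemma exists_sl2Hom_intCast_eq_gcd (n : ℕ) (a b : ℤ) :
    ∃ A : SL(2, ℤ), sl2Hom n A ((a : ZMod n), (b : ZMod n)) = (((a.gcd b : ℕ) : ZMod n), 0) := by
  obtain ⟨A, h₁, h₂⟩ := Int.exists_SL2_apply_eq_gcd a b
  exact ⟨A, by rw [sl2Hom_apply_intCast, h₁, h₂]; simp⟩

lemma exists_sl2Hom_eq_divisor (n : ℕ) (x : ZMod n × ZMod n) :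
    ∃ A : SL(2, ℤ), ∃ d : ℕ, d ∣ n ∧ sl2Hom n A x = ((d : ZMod n), 0) := by
  obtain ⟨A, hA⟩ := exists_sl2Hom_intCast_eq_gcd n (x.1.cast : ℤ) (x.2.cast : ℤ)
  set g : ℤ := ((Int.gcd x.1.cast x.2.cast : ℕ) : ℤ)
  obtain ⟨B, hB⟩ := exists_sl2Hom_intCast_eq_gcd n g n
  refine ⟨B * A, _, Int.gcd_dvd_natAbs_right g n, ?_⟩
  have hgn : (((Int.gcd x.1.cast x.2.cast : ℕ) : ZMod n), (0 : ZMod n)) =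
      ((g : ZMod n), ((n : ℤ) : ZMod n)) := by simp [g]
  rw [sl2Hom_mul, ← hB, ← hgn, ← hA]
  simp

lemma addOrderOf_natCast_zero {n d : ℕ} (hn : n ≠ 0) (hd : d ∣ n) :
    addOrderOf (((d : ZMod n), 0) : ZMod n × ZMod n) = n / d := by
  rw [Prod.addOrderOf, addOrderOf_zero, Nat.lcm_one_right, ZMod.addOrderOf_coe _ hn,
    Nat.gcd_eq_right hd]

/-- `SL₂(ℤ)` acts transitively on the elements of `Z_n²` of a given additive
order. -/
theorem statement9 (n : ℕ) (hn : 1 ≤ n) (x y : ZMod n × ZMod n)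
    (h : addOrderOf x = addOrderOf y) :
    ∃ A : Matrix.SpecialLinearGroup (Fin 2) ℤ, sl2Hom n A x = y := by
  have hn₀ : n ≠ 0 := Nat.one_le_iff_ne_zero.mp hn
  obtain ⟨A, d, hd, hA⟩ := exists_sl2Hom_eq_divisor n x
  obtain ⟨B, e, he, hB⟩ := exists_sl2Hom_eq_divisor n y
  have hde : d = e := by
    have hord := addOrderOf_sl2Hom n A x ▸ addOrderOf_sl2Hom n B y ▸ h
    rw [hA, hB, addOrderOf_natCast_zero hn₀ hd, addOrderOf_natCast_zero hn₀ he] at hord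
    rw [← Nat.div_div_self hd hn₀, hord, Nat.div_div_self he hn₀]
  refine ⟨B⁻¹ * A, ?_⟩
  rw [sl2Hom_mul, hA, hde, ← hB, ← sl2Hom_mul, inv_mul_cancel, sl2Hom_one]
end

section
/- Let p be a prime, n ≥ 2, and π : (ZMod p^n)² → (ZMod p^{n-1})² the coordinatewise reduction homomorphism. If K ≤ (ZMod p^n)² is a cyclic additive subgroup of order p^n, then π(K) is a cyclic subgroup of (ZMod p^{n-1})² of order p^{n-1}. Moreover, for every cyclic additive subgroup K' ≤ (ZMod p^{n-1})² of order p^{n-1}, the number of cyclic additive subgroups K ≤ (ZMod p^n)² of order p^n with π(K) = K' equals exactly p. -/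
/-!
An element `(a, b)` of `(ZMod p^k)²` has additive order `p^k` exactly when `a` or `b` is a unit,
and for `n ≥ 2` the reduction `ZMod p^n → ZMod p^{n-1}` both preserves and reflects units; this
gives the first claim. Up to swapping the coordinates, a cyclic subgroup of order `p^n` is
`⟨(1, c)⟩` for a unique `c`, and it lies over `⟨(1, c')⟩` exactly when `c` reduces to `c'`. So the
lifts of `K'` correspond to a fiber of `ZMod p^n → ZMod p^{n-1}`, which has `p` elements.
-/

/-- The coordinatewise reduction homomorphism
`π : (ZMod p^n)² → (ZMod p^{n-1})²`. -/
def redHom (p n : ℕ) :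
    (ZMod (p ^ n) × ZMod (p ^ n)) →+ (ZMod (p ^ (n - 1)) × ZMod (p ^ (n - 1))) :=
  AddMonoidHom.prodMap
    (ZMod.castHom (pow_dvd_pow p (Nat.sub_le n 1)) (ZMod (p ^ (n - 1)))).toAddMonoidHom
    (ZMod.castHom (pow_dvd_pow p (Nat.sub_le n 1)) (ZMod (p ^ (n - 1)))).toAddMonoidHom

/-- A subgroup is cyclic of order `m` if it is generated by a single element of
additive order `m`. -/
def IsCyclicOfOrder {G : Type*} [AddGroup G] (K : AddSubgroup G) (m : ℕ) : Prop :=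
  ∃ x : G, K = AddSubgroup.zmultiples x ∧ addOrderOf x = m

open AddSubgroup

namespace ZMod

theorem addOrderOf_eq_iff_isUnit {N : ℕ} [NeZero N] {a : ZMod N} :
    addOrderOf a = N ↔ IsUnit a := by
  rw [← natCast_zmod_val a, addOrderOf_coe _ (NeZero.ne N), isUnit_iff_coprime,
    Nat.div_eq_self, Nat.coprime_comm]
  simp [NeZero.ne N, Nat.Coprime]

theorem addOrderOf_pair_of_isUnit {N : ℕ} [NeZero N] {a b : ZMod N} (h : IsUnit a ∨ IsUnit b) :
    addOrderOf (a, b) = N := by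
  rw [Prod.addOrderOf]
  rcases h with h | h <;> rw [addOrderOf_eq_iff_isUnit.mpr h]
  · exact Nat.lcm_eq_left (by simpa using addOrderOf_dvd_natCard b)
  · exact Nat.lcm_eq_right (by simpa using addOrderOf_dvd_natCard a)

theorem isUnit_or_isUnit_of_addOrderOf_pair {p k : ℕ} [Fact p.Prime] {a b : ZMod (p ^ k)}
    (h : addOrderOf (a, b) = p ^ k) : IsUnit a ∨ IsUnit b := by
  have hp := (Fact.out : p.Prime)
  rw [Prod.addOrderOf] at h
  obtain ⟨i, -, hi⟩ := (Nat.dvd_prime_pow hp).mp (by simpa using addOrderOf_dvd_natCard a)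
  obtain ⟨j, -, hj⟩ := (Nat.dvd_prime_pow hp).mp (by simpa using addOrderOf_dvd_natCard b)
  simp only [addOrderOf_eq_iff_isUnit.symm, ← h, hi, hj]
  rcases le_total i j with hij | hij
  · exact .inr (Nat.lcm_eq_right (pow_dvd_pow p hij)).symm
  · exact .inl (Nat.lcm_eq_left (pow_dvd_pow p hij)).symm

theorem isUnit_castHom_pow_iff {p m n : ℕ} [NeZero (p ^ n)] (hm : m ≠ 0) (hmn : m ≤ n)
    (a : ZMod (p ^ n)) : IsUnit (castHom (pow_dvd_pow p hmn) (ZMod (p ^ m)) a) ↔ IsUnit a := by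
  conv_lhs => rw [← natCast_zmod_val a, map_natCast]
  conv_rhs => rw [← natCast_zmod_val a]
  rw [isUnit_iff_coprime, isUnit_iff_coprime, Nat.coprime_pow_right_iff (by omega),
    Nat.coprime_pow_right_iff (by omega)]

theorem ncard_castHom_fiber {d N : ℕ} [NeZero N] (h : d ∣ N) (c : ZMod d) :
    (castHom h (ZMod d) ⁻¹' {c}).ncard = N / d := by
  have hd : d ≠ 0 := fun hd => NeZero.ne N (Nat.eq_zero_of_zero_dvd (hd ▸ h))
  let f := (castHom h (ZMod d)).toAddMonoidHom
  have hker : N = Nat.card f.ker * d := by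
    have := f.ker.card_mul_index
    rwa [AddSubgroup.index_ker f, AddMonoidHom.range_eq_top.mpr (castHom_surjective h),
      AddSubgroup.card_top, Nat.card_zmod, Nat.card_zmod, eq_comm] at this
  calc (castHom h (ZMod d) ⁻¹' {c}).ncard = Nat.card f.ker := by
        rw [← Nat.card_coe_set_eq]
        exact Nat.card_congr (f.fiberEquivKerOfSurjective (castHom_surjective h) c)
    _ = N / d := (Nat.div_eq_of_eq_mul_left (Nat.pos_of_ne_zero hd) hker).symm

theorem smul_mem_zmultiples {N : ℕ} {M : Type*} [AddCommGroup M] [Module (ZMod N) M]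
    (r : ZMod N) (v : M) : r • v ∈ zmultiples v :=
  mem_zmultiples_iff.mpr
    ⟨(r.cast : ℤ), by rw [← Int.cast_smul_eq_zsmul (ZMod N), intCast_zmod_cast]⟩

theorem zmultiples_smul_of_isUnit {N : ℕ} {M : Type*} [AddCommGroup M] [Module (ZMod N) M]
    {u : ZMod N} (hu : IsUnit u) (v : M) : zmultiples (u • v) = zmultiples v := by
  refine le_antisymm (zmultiples_le.mpr (smul_mem_zmultiples u v)) (zmultiples_le.mpr ?_)
  simpa [smul_smul] using smul_mem_zmultiples ((hu.unit⁻¹ : (ZMod N)ˣ) : ZMod N) (u • v)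

theorem exists_zmultiples_pair_eq_zmultiples_one_pair {N : ℕ} {a : ZMod N} (ha : IsUnit a)
    (b : ZMod N) : ∃ c : ZMod N, zmultiples (a, b) = zmultiples (1, c) :=
  ⟨(ha.unit⁻¹ : (ZMod N)ˣ) * b, by
    rw [← zmultiples_smul_of_isUnit ha (1, _), Prod.smul_mk, smul_eq_mul, smul_eq_mul, mul_one,
      ← mul_assoc, IsUnit.mul_val_inv, one_mul]⟩

end ZMod

theorem zmultiples_one_pair_injective {R : Type*} [Ring R] :
    Function.Injective fun c : R => zmultiples ((1 : R), c) := by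
  intro c d (h : zmultiples ((1 : R), c) = zmultiples ((1 : R), d))
  have hd : ((1 : R), d) ∈ zmultiples ((1 : R), c) := h ▸ mem_zmultiples _
  obtain ⟨k, hk⟩ := mem_zmultiples_iff.mp hd
  simp only [Prod.smul_mk, zsmul_eq_mul, mul_one, Prod.mk.injEq] at hk
  rw [← hk.2, hk.1, one_mul]

theorem isUnit_fst_of_one_pair_mem_zmultiples {R : Type*} [CommRing R] {a b c : R}
    (h : ((1 : R), c) ∈ zmultiples (a, b)) : IsUnit a := by
  obtain ⟨k, hk⟩ := mem_zmultiples_iff.mp h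
  simp only [Prod.smul_mk, zsmul_eq_mul, Prod.mk.injEq] at hk
  exact IsUnit.of_mul_eq_one_right _ hk.1

theorem IsCyclicOfOrder.map_of_injective {G H : Type*} [AddGroup G] [AddGroup H]
    {K : AddSubgroup G} {m : ℕ} (hK : IsCyclicOfOrder K m) {f : G →+ H}
    (hf : Function.Injective f) : IsCyclicOfOrder (K.map f) m := by
  obtain ⟨x, rfl, hx⟩ := hK
  exact ⟨f x, f.map_zmultiples x, (addOrderOf_injective f hf x).trans hx⟩

def swapHom (R : Type*) [AddCommMonoid R] : R × R →+ R × R :=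
  (AddEquiv.prodComm : R × R ≃+ R × R).toAddMonoidHom

theorem swapHom_injective (R : Type*) [AddCommMonoid R] : Function.Injective (swapHom R) :=
  Prod.swap_injective

theorem map_swapHom_map_swapHom {R : Type*} [AddCommGroup R] (K : AddSubgroup (R × R)) :
    (K.map (swapHom R)).map (swapHom R) = K := by
  rw [map_map]
  exact map_id K

section Reduction

variable (p n : ℕ)

def cyclicLifts (K' : AddSubgroup (ZMod (p ^ (n - 1)) × ZMod (p ^ (n - 1)))) :
    Set (AddSubgroup (ZMod (p ^ n) × ZMod (p ^ n))) :=
  {K | IsCyclicOfOrder K (p ^ n) ∧ K.map (redHom p n) = K'}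

variable {p n}

theorem redHom_apply (a b : ZMod (p ^ n)) :
    redHom p n (a, b) = (ZMod.castHom (pow_dvd_pow p (Nat.sub_le n 1)) (ZMod (p ^ (n - 1))) a,
      ZMod.castHom (pow_dvd_pow p (Nat.sub_le n 1)) (ZMod (p ^ (n - 1))) b) :=
  rfl

theorem redHom_comp_swapHom :
    (redHom p n).comp (swapHom _) = (swapHom _).comp (redHom p n) :=
  rfl

theorem addOrderOf_redHom [Fact p.Prime] {x : ZMod (p ^ n) × ZMod (p ^ n)}
    (hx : addOrderOf x = p ^ n) : addOrderOf (redHom p n x) = p ^ (n - 1) := by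
  obtain ⟨a, b⟩ := x
  rw [redHom_apply]
  exact ZMod.addOrderOf_pair_of_isUnit <|
    (ZMod.isUnit_or_isUnit_of_addOrderOf_pair hx).imp (·.map _) (·.map _)

theorem IsCyclicOfOrder.map_redHom [Fact p.Prime] {K : AddSubgroup (ZMod (p ^ n) × ZMod (p ^ n))}
    (hK : IsCyclicOfOrder K (p ^ n)) : IsCyclicOfOrder (K.map (redHom p n)) (p ^ (n - 1)) := by
  obtain ⟨x, rfl, hx⟩ := hK
  exact ⟨redHom p n x, (redHom p n).map_zmultiples x, addOrderOf_redHom hx⟩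

theorem map_swapHom_mem_cyclicLifts {K' : AddSubgroup (ZMod (p ^ (n - 1)) × ZMod (p ^ (n - 1)))}
    {K : AddSubgroup (ZMod (p ^ n) × ZMod (p ^ n))} (hK : K ∈ cyclicLifts p n K') :
    K.map (swapHom _) ∈ cyclicLifts p n (K'.map (swapHom _)) :=
  ⟨hK.1.map_of_injective (swapHom_injective _), by
    rw [map_map, redHom_comp_swapHom, ← map_map, hK.2]⟩

theorem ncard_cyclicLifts_map_swapHom
    (K' : AddSubgroup (ZMod (p ^ (n - 1)) × ZMod (p ^ (n - 1)))) :
    (cyclicLifts p n (K'.map (swapHom _))).ncard = (cyclicLifts p n K').ncard := by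
  have hlifts :
      cyclicLifts p n (K'.map (swapHom _)) = (·.map (swapHom _)) '' cyclicLifts p n K' := by
    refine Set.Subset.antisymm (fun K hK => ⟨K.map (swapHom _), ?_, map_swapHom_map_swapHom K⟩) ?_
    · simpa only [map_swapHom_map_swapHom] using map_swapHom_mem_cyclicLifts hK
    · rintro _ ⟨K, hK, rfl⟩
      exact map_swapHom_mem_cyclicLifts hK
  rw [hlifts, Set.ncard_image_of_injective _ (map_injective (swapHom_injective _))]

theorem cyclicLifts_zmultiples_one_pair [Fact p.Prime] (hn : 2 ≤ n) (c' : ZMod (p ^ (n - 1))) :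
    cyclicLifts p n (zmultiples (1, c')) =
      (fun c => zmultiples (1, c)) ''
        (ZMod.castHom (pow_dvd_pow p (Nat.sub_le n 1)) (ZMod (p ^ (n - 1))) ⁻¹' {c'}) := by
  ext K
  constructor
  · rintro ⟨⟨⟨a, b⟩, rfl, -⟩, hmap⟩
    rw [AddMonoidHom.map_zmultiples, redHom_apply] at hmap
    have hmem : ((1 : ZMod (p ^ (n - 1))), c') ∈ zmultiples (_, _) :=
      hmap.symm ▸ mem_zmultiples _
    have hunit : IsUnit a := (ZMod.isUnit_castHom_pow_iff (by omega) (Nat.sub_le n 1) a).mp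
      (isUnit_fst_of_one_pair_mem_zmultiples hmem)
    obtain ⟨c, hc⟩ := ZMod.exists_zmultiples_pair_eq_zmultiples_one_pair hunit b
    refine ⟨c, zmultiples_one_pair_injective ?_, hc.symm⟩
    change zmultiples (1, _) = zmultiples (1, c')
    rw [← hmap, ← redHom_apply, ← AddMonoidHom.map_zmultiples, hc, AddMonoidHom.map_zmultiples,
      redHom_apply, map_one]
  · rintro ⟨c, rfl : _ = c', rfl⟩
    refine ⟨⟨_, rfl, ZMod.addOrderOf_pair_of_isUnit (.inl isUnit_one)⟩, ?_⟩
    rw [AddMonoidHom.map_zmultiples, redHom_apply, map_one]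

theorem ncard_cyclicLifts_zmultiples_of_isUnit [hp : Fact p.Prime] (hn : 2 ≤ n)
    {a' : ZMod (p ^ (n - 1))} (ha : IsUnit a') (b' : ZMod (p ^ (n - 1))) :
    (cyclicLifts p n (zmultiples (a', b'))).ncard = p := by
  obtain ⟨c', hc'⟩ := ZMod.exists_zmultiples_pair_eq_zmultiples_one_pair ha b'
  rw [hc', cyclicLifts_zmultiples_one_pair hn,
    Set.ncard_image_of_injective _ zmultiples_one_pair_injective, ZMod.ncard_castHom_fiber,
    Nat.pow_div (Nat.sub_le n 1) hp.out.pos, Nat.sub_sub_self (by omega), pow_one]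

theorem ncard_cyclicLifts [Fact p.Prime] (hn : 2 ≤ n)
    {K' : AddSubgroup (ZMod (p ^ (n - 1)) × ZMod (p ^ (n - 1)))}
    (hK' : IsCyclicOfOrder K' (p ^ (n - 1))) : (cyclicLifts p n K').ncard = p := by
  obtain ⟨⟨a', b'⟩, rfl, hord⟩ := hK'
  rcases ZMod.isUnit_or_isUnit_of_addOrderOf_pair hord with ha | hb
  · exact ncard_cyclicLifts_zmultiples_of_isUnit hn ha b'
  · have hswap : zmultiples (a', b') = (zmultiples (b', a')).map (swapHom _) :=
      ((swapHom _).map_zmultiples (b', a')).symm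
    rw [hswap, ncard_cyclicLifts_map_swapHom]
    exact ncard_cyclicLifts_zmultiples_of_isUnit hn hb a'

end Reduction

/-- If `K ≤ (ZMod p^n)²` is cyclic of order `p^n` then `π(K)` is cyclic of
order `p^{n-1}`; moreover every cyclic subgroup `K' ≤ (ZMod p^{n-1})²` of order
`p^{n-1}` is the image of exactly `p` cyclic subgroups of `(ZMod p^n)²` of
order `p^n`. -/
theorem statement13 (p : ℕ) (hp : p.Prime) (n : ℕ) (hn : 2 ≤ n) :
    (∀ K : AddSubgroup (ZMod (p ^ n) × ZMod (p ^ n)),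
      IsCyclicOfOrder K (p ^ n) →
        IsCyclicOfOrder (K.map (redHom p n)) (p ^ (n - 1))) ∧
    (∀ K' : AddSubgroup (ZMod (p ^ (n - 1)) × ZMod (p ^ (n - 1))),
      IsCyclicOfOrder K' (p ^ (n - 1)) →
        {K : AddSubgroup (ZMod (p ^ n) × ZMod (p ^ n)) |
          IsCyclicOfOrder K (p ^ n) ∧ K.map (redHom p n) = K'}.ncard = p) := by
  have : Fact p.Prime := ⟨hp⟩
  exact ⟨fun K hK => hK.map_redHom, fun K' hK' => ncard_cyclicLifts hn hK'⟩
end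

section
/- Let p be a prime, n ≥ 1, and K a non-cyclic additive subgroup of (ZMod p^n)². Then: (1) there is exactly one additive subgroup H ≤ K with K/H isomorphic to (ZMod p)², namely H = pK = {p • x : x ∈ K}; (2) K has exactly p + 1 additive subgroups of index p. -/
/-!
`K` is a finite abelian `p`-group, and `K/pK` is an `𝔽_p`-vector space of order
`|K[p]| ≤ |(ZMod p^n)²[p]| = p²`. If `K/pK` were cyclic, generated by the image of `x`, then
`K = ⟨x⟩ + pK = ⟨x⟩ + p^j K` for every `j`, so `K = ⟨x⟩` (Nakayama); hence `K/pK ≅ (ZMod p)²`.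
A quotient of `K` isomorphic to `(ZMod p)²` is killed by `p`, so it is a quotient of `K/pK` of the
same order, which gives (1). A subgroup of index `p` also contains `pK`, so these subgroups are the
preimages of the `p + 1` lines of `𝔽_p²`.
-/

def pSmulHom (p : ℕ) {G : Type*} [AddCommGroup G] : G →+ G :=
  AddMonoidHom.mk' (fun x => p • x) (fun a b => smul_add p a b)

@[simp]
lemma pSmulHom_apply (p : ℕ) {G : Type*} [AddCommGroup G] (x : G) : pSmulHom p x = p • x := rfl

lemma natCard_eq_pow_finrank_zmod (p : ℕ) [Fact p.Prime] (V : Type*) [AddCommGroup V]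
    [Module (ZMod p) V] [Finite V] : Nat.card V = p ^ Module.finrank (ZMod p) V := by
  rw [Module.natCard_eq_pow_finrank (K := ZMod p), Nat.card_zmod]

lemma nonempty_linearEquiv_zmod_prod_of_not_isAddCyclic (p : ℕ) [hp : Fact p.Prime] (V : Type*)
    [AddCommGroup V] [Module (ZMod p) V] [Finite V] (hcard : Nat.card V ≤ p ^ 2)
    (hcyc : ¬ IsAddCyclic V) : Nonempty (V ≃ₗ[ZMod p] ZMod p × ZMod p) := by
  have hV := natCard_eq_pow_finrank_zmod p V
  have hrank : Module.finrank (ZMod p) V = 2 := by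
    rw [hV] at hcard
    have hle := (Nat.pow_le_pow_iff_right hp.out.one_lt).1 hcard
    by_contra hne
    apply hcyc
    interval_cases h : Module.finrank (ZMod p) V
    · have : Subsingleton V := Finite.card_le_one_iff_subsingleton.1 (by simp [hV])
      infer_instance
    · exact isAddCyclic_of_prime_card (by rw [hV, pow_one])
    · exact absurd rfl hne
  exact ⟨LinearEquiv.ofFinrankEq V (ZMod p × ZMod p)
    (by rw [hrank, Module.finrank_prod, Module.finrank_self])⟩

lemma ncard_setOf_index_eq_zmod_prod (p : ℕ) [hp : Fact p.Prime] :
    {H : AddSubgroup (ZMod p × ZMod p) | H.index = p}.ncard = p + 1 := by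
  have hiff : ∀ H : AddSubgroup (ZMod p × ZMod p),
      H.index = p ↔ Module.finrank (ZMod p) (AddSubgroup.toZModSubmodule p H) = 1 := by
    intro H
    have hmul := H.card_mul_index
    rw [Nat.card_prod, Nat.card_zmod] at hmul
    have hindex : H.index = p ↔ Nat.card H = p := by
      constructor <;> intro h <;> rw [h] at hmul
      exacts [Nat.eq_of_mul_eq_mul_right hp.out.pos hmul, Nat.eq_of_mul_eq_mul_left hp.out.pos hmul]
    have hcard : Nat.card H = p ^ Module.finrank (ZMod p) (AddSubgroup.toZModSubmodule p H) :=
      natCard_eq_pow_finrank_zmod p (AddSubgroup.toZModSubmodule p H)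
    rw [hindex, hcard]
    generalize Module.finrank (ZMod p) (AddSubgroup.toZModSubmodule p H) = r
    nth_rewrite 2 [← pow_one p]
    exact pow_right_inj₀ hp.out.pos hp.out.ne_one
  rw [← Nat.card_coe_set_eq, Nat.card_congr ((AddSubgroup.toZModSubmodule p).toEquiv.subtypeEquiv
      (p := (· ∈ {H : AddSubgroup (ZMod p × ZMod p) | H.index = p}))
      (q := fun S : Submodule (ZMod p) (ZMod p × ZMod p) => Module.finrank (ZMod p) S = 1) hiff),
    ← Nat.card_congr (Projectivization.equivSubmodule (ZMod p) (ZMod p × ZMod p)),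
    Projectivization.card_of_finrank_two _ _ (by simp), Nat.card_zmod]

section

variable {A : Type*} [AddCommGroup A] {p : ℕ}

lemma range_pSmulHom_le_iff {H : AddSubgroup A} :
    (pSmulHom p : A →+ A).range ≤ H ↔ ∀ v : A ⧸ H, p • v = 0 := by
  constructor
  · intro h v
    induction v using QuotientAddGroup.induction_on with
    | H a => rw [← QuotientAddGroup.mk_nsmul, QuotientAddGroup.eq_zero_iff]; exact h ⟨a, rfl⟩
  · rintro h _ ⟨a, rfl⟩
    rw [← QuotientAddGroup.eq_zero_iff, pSmulHom_apply, QuotientAddGroup.mk_nsmul]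
    exact h _

lemma range_pSmulHom_le_of_index_eq {H : AddSubgroup A} (h : H.index = p) :
    (pSmulHom p : A →+ A).range ≤ H := by
  rintro _ ⟨a, rfl⟩
  exact h ▸ H.nsmul_index_mem a

lemma card_quotient_range_eq_card_ker [Finite A] (f : A →+ A) :
    Nat.card (A ⧸ f.range) = Nat.card f.ker := by
  have hA := f.range.card_mul_index
  rw [← f.ker.card_mul_index, AddSubgroup.index_ker, mul_comm] at hA
  rw [← AddSubgroup.index_eq_card]
  exact Nat.eq_of_mul_eq_mul_right Nat.card_pos hA

theorem isAddCyclic_of_isAddCyclic_quotient_range_pSmulHom {m : ℕ} (hA : ∀ a : A, p ^ m • a = 0)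
    [IsAddCyclic (A ⧸ (pSmulHom p : A →+ A).range)] : IsAddCyclic A := by
  obtain ⟨g, hg⟩ := IsAddCyclic.exists_generator (α := A ⧸ (pSmulHom p : A →+ A).range)
  obtain ⟨x, rfl⟩ := QuotientAddGroup.mk_surjective g
  have hstep : ∀ a : A, ∃ (k : ℤ) (b : A), a = k • x + (p : ℤ) • b := by
    intro a
    obtain ⟨k, hk⟩ := AddSubgroup.mem_zmultiples_iff.mp (hg a)
    rw [← QuotientAddGroup.mk_zsmul, QuotientAddGroup.eq] at hk
    obtain ⟨b, hb⟩ := hk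
    exact ⟨k, b, by rw [pSmulHom_apply] at hb; rw [natCast_zsmul, hb]; abel⟩
  have hpow : ∀ (j : ℕ) (a : A), ∃ (k : ℤ) (b : A), a = k • x + (p : ℤ) ^ j • b := by
    intro j
    induction j with
    | zero => exact fun a => ⟨0, a, by simp⟩
    | succ j ih =>
      intro a
      obtain ⟨k, b, rfl⟩ := ih a
      obtain ⟨l, c, rfl⟩ := hstep b
      refine ⟨k + p ^ j * l, c, ?_⟩
      module
  refine ⟨x, fun a => ?_⟩
  obtain ⟨k, b, rfl⟩ := hpow m a
  exact ⟨k, by rw [← Nat.cast_pow, natCast_zsmul, hA, add_zero]⟩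

lemma card_ker_pSmulHom_le_of_isAddCyclic [Finite A] [IsAddCyclic A] (hp : 0 < p) :
    Nat.card (pSmulHom p : A →+ A).ker ≤ p := by
  classical
  have := Fintype.ofFinite A
  convert IsAddCyclic.card_nsmul_eq_zero_le (α := A) hp
  rw [← Fintype.card_subtype, ← Nat.card_eq_fintype_card]
  rfl

lemma card_ker_pSmulHom_prod {B : Type*} [AddCommGroup B] :
    Nat.card (pSmulHom p : A × B →+ A × B).ker =
      Nat.card (pSmulHom p : A →+ A).ker * Nat.card (pSmulHom p : B →+ B).ker := by
  have h : (pSmulHom p : A × B →+ A × B) = (pSmulHom p).prodMap (pSmulHom p) := rfl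
  rw [h, AddMonoidHom.ker_prodMap, Nat.card_congr (AddSubgroup.prodEquiv _ _).toEquiv,
    Nat.card_prod]

lemma card_ker_pSmulHom_addSubgroup_le [Finite A] (K : AddSubgroup A) :
    Nat.card (pSmulHom p : K →+ K).ker ≤ Nat.card (pSmulHom p : A →+ A).ker :=
  Nat.card_le_card_of_injective (fun x => ⟨x.1, congrArg Subtype.val x.2⟩)
    fun _ _ h => Subtype.ext (Subtype.ext (congrArg Subtype.val h :))

lemma card_ker_pSmulHom_addSubgroup_prod_le {B C : Type*} [AddCommGroup B] [AddCommGroup C]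
    [Finite B] [Finite C] [IsAddCyclic B] [IsAddCyclic C] (hp : 0 < p) (K : AddSubgroup (B × C)) :
    Nat.card (pSmulHom p : K →+ K).ker ≤ p ^ 2 :=
  calc _ ≤ Nat.card (pSmulHom p : B × C →+ B × C).ker := card_ker_pSmulHom_addSubgroup_le K
    _ ≤ p * p := card_ker_pSmulHom_prod.trans_le <| Nat.mul_le_mul
        (card_ker_pSmulHom_le_of_isAddCyclic hp) (card_ker_pSmulHom_le_of_isAddCyclic hp)
    _ = p ^ 2 := (sq p).symm

lemma map_pSmulHom_le (K : AddSubgroup A) : K.map (pSmulHom p) ≤ K := by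
  rintro _ ⟨x, hx, rfl⟩
  exact K.nsmul_mem hx p

lemma addSubgroupOf_map_pSmulHom (K : AddSubgroup A) :
    (K.map (pSmulHom p)).addSubgroupOf K = (pSmulHom p : K →+ K).range := by
  ext ⟨x, hx⟩
  simp only [AddSubgroup.mem_addSubgroupOf, AddSubgroup.mem_map, AddMonoidHom.mem_range,
    pSmulHom_apply, Subtype.ext_iff, AddSubgroup.coe_nsmul, Subtype.exists, exists_prop]

lemma nonempty_quotient_addEquiv_iff [Finite A] {W : Type*} [AddCommGroup W]
    (e : A ⧸ (pSmulHom p : A →+ A).range ≃+ W) (H : AddSubgroup A) :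
    Nonempty (A ⧸ H ≃+ W) ↔ H = (pSmulHom p : A →+ A).range := by
  refine ⟨fun ⟨e'⟩ => ?_, fun h => h ▸ ⟨e⟩⟩
  have hW : ∀ w : W, p • w = 0 := fun w => by
    rw [← e.apply_symm_apply w, ← map_nsmul, range_pSmulHom_le_iff.1 le_rfl, map_zero]
  have hle : (pSmulHom p : A →+ A).range ≤ H :=
    range_pSmulHom_le_iff.2 fun v => e'.injective (by rw [map_nsmul, hW, map_zero])
  have hindex : (pSmulHom p : A →+ A).range.index = H.index := by
    rw [AddSubgroup.index_eq_card, AddSubgroup.index_eq_card, Nat.card_congr e.toEquiv,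
      Nat.card_congr e'.toEquiv]
  have hrel := AddSubgroup.relIndex_mul_index hle
  rw [← hindex, Nat.mul_eq_right AddSubgroup.index_ne_zero_of_finite,
    AddSubgroup.relIndex_eq_one] at hrel
  exact le_antisymm hrel hle

lemma ncard_setOf_index_eq_of_surjective {B : Type*} [AddCommGroup B] (φ : A →+ B)
    (hφ : Function.Surjective φ) {d : ℕ} (hker : ∀ H : AddSubgroup A, H.index = d → φ.ker ≤ H) :
    {H : AddSubgroup A | H.index = d}.ncard = {H : AddSubgroup B | H.index = d}.ncard := by
  have himage : {H : AddSubgroup A | H.index = d} =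
      AddSubgroup.comap φ '' {H : AddSubgroup B | H.index = d} := by
    ext H
    refine ⟨fun hH => ⟨H.map φ, ?_, ?_⟩, ?_⟩
    · rwa [Set.mem_ofPred, ← AddSubgroup.index_comap_of_surjective _ hφ, AddSubgroup.comap_map_eq,
        sup_eq_left.2 (hker H hH)]
    · rw [AddSubgroup.comap_map_eq, sup_eq_left.2 (hker H hH)]
    · rintro ⟨H', hH', rfl⟩
      rwa [Set.mem_ofPred, AddSubgroup.index_comap_of_surjective _ hφ]
  rw [himage, Set.ncard_image_of_injective _ (AddSubgroup.comap_injective hφ)]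

lemma ncard_setOf_le_and_addSubgroupOf (K : AddSubgroup A) (P : AddSubgroup K → Prop) :
    {H : AddSubgroup A | H ≤ K ∧ P (H.addSubgroupOf K)}.ncard = {H | P H}.ncard := by
  have himage : {H : AddSubgroup A | H ≤ K ∧ P (H.addSubgroupOf K)} =
      AddSubgroup.map K.subtype '' {H | P H} := by
    ext H
    refine ⟨fun ⟨hHK, hH⟩ => ⟨_, hH, ?_⟩, ?_⟩
    · rw [AddSubgroup.addSubgroupOf_map_subtype, inf_eq_left.2 hHK]
    · rintro ⟨H', hH', rfl⟩
      refine ⟨AddSubgroup.map_subtype_le H', ?_⟩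
      rwa [AddSubgroup.addSubgroupOf, AddSubgroup.comap_map_eq_self_of_injective K.subtype_injective]
  rw [himage, Set.ncard_image_of_injective _ (AddSubgroup.map_injective K.subtype_injective)]

theorem nonempty_quotient_range_pSmulHom_addEquiv [Finite A] [Fact p.Prime] {m : ℕ}
    (hA : ∀ a : A, p ^ m • a = 0) (hker : Nat.card (pSmulHom p : A →+ A).ker ≤ p ^ 2)
    (hcyc : ¬ IsAddCyclic A) : Nonempty (A ⧸ (pSmulHom p : A →+ A).range ≃+ ZMod p × ZMod p) := by
  let := AddCommGroup.zmodModule (range_pSmulHom_le_iff.1 (le_refl (pSmulHom p : A →+ A).range))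
  obtain ⟨e⟩ := nonempty_linearEquiv_zmod_prod_of_not_isAddCyclic p
    (A ⧸ (pSmulHom p : A →+ A).range) (by rwa [card_quotient_range_eq_card_ker])
    fun _ => hcyc (isAddCyclic_of_isAddCyclic_quotient_range_pSmulHom hA)
  exact ⟨e.toAddEquiv⟩

end

theorem statement14_general (p : ℕ) (hp : p.Prime) (n : ℕ)
    (K : AddSubgroup (ZMod (p ^ n) × ZMod (p ^ n)))
    (hK : ¬ ∃ x, K = AddSubgroup.zmultiples x) :
    (∀ H : AddSubgroup (ZMod (p ^ n) × ZMod (p ^ n)),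
      (H ≤ K ∧ Nonempty ((↥K ⧸ H.addSubgroupOf K) ≃+ (ZMod p × ZMod p))) ↔
        H = K.map (pSmulHom p)) ∧
    {H : AddSubgroup (ZMod (p ^ n) × ZMod (p ^ n)) |
      H ≤ K ∧ (H.addSubgroupOf K).index = p}.ncard = p + 1 := by
  have : Fact p.Prime := ⟨hp⟩
  have : NeZero (p ^ n) := ⟨pow_ne_zero n hp.ne_zero⟩
  have hZ : ∀ x : ZMod (p ^ n), p ^ n • x = 0 := fun x => by
    rw [nsmul_eq_mul, ZMod.natCast_self, zero_mul]
  have hann : ∀ a : K, p ^ n • a = 0 := fun a => Subtype.ext (Prod.ext (hZ _) (hZ _))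
  have hcyc : ¬ IsAddCyclic K := by
    rw [K.isAddCyclic_iff_exists_zmultiples_eq_top]
    exact fun ⟨x, hx⟩ => hK ⟨x, hx.symm⟩
  obtain ⟨e⟩ := nonempty_quotient_range_pSmulHom_addEquiv hann
    (card_ker_pSmulHom_addSubgroup_prod_le hp.pos K) hcyc
  refine ⟨fun H => ⟨fun ⟨hHK, hH⟩ => ?_, ?_⟩, ?_⟩
  · rwa [nonempty_quotient_addEquiv_iff e, ← addSubgroupOf_map_pSmulHom,
      AddSubgroup.addSubgroupOf_inj, inf_of_le_left hHK, inf_of_le_left (map_pSmulHom_le K)] at hH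
  · rintro rfl
    exact ⟨map_pSmulHom_le K, by rw [addSubgroupOf_map_pSmulHom]; exact ⟨e⟩⟩
  · have hker : (e.toAddMonoidHom.comp (QuotientAddGroup.mk' _)).ker =
        (pSmulHom p : K →+ K).range := by
      ext; simp
    rw [ncard_setOf_le_and_addSubgroupOf K (·.index = p),
      ncard_setOf_index_eq_of_surjective _
        (e.surjective.comp (QuotientAddGroup.mk'_surjective _))
        fun H hH => hker ▸ range_pSmulHom_le_of_index_eq hH,
      ncard_setOf_index_eq_zmod_prod]

/-- Let `p` be prime, `n ≥ 1`, and `K` a non-cyclic additive subgroup of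
`(ZMod p^n)²`.  Then (1) a subgroup `H ≤ K` satisfies `K/H ≃ (ZMod p)²` if and
only if `H = pK`, and (2) `K` has exactly `p + 1` subgroups of index `p`. -/
theorem statement14 (p : ℕ) (hp : p.Prime) (n : ℕ) (hn : 1 ≤ n)
    (K : AddSubgroup (ZMod (p ^ n) × ZMod (p ^ n)))
    (hK : ¬ ∃ x, K = AddSubgroup.zmultiples x) :
    (∀ H : AddSubgroup (ZMod (p ^ n) × ZMod (p ^ n)),
      (H ≤ K ∧ Nonempty ((↥K ⧸ H.addSubgroupOf K) ≃+ (ZMod p × ZMod p))) ↔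
        H = K.map (pSmulHom p)) ∧
    {H : AddSubgroup (ZMod (p ^ n) × ZMod (p ^ n)) |
      H ≤ K ∧ (H.addSubgroupOf K).index = p}.ncard = p + 1 :=
  statement14_general p hp n K hK
end

section
/- For all integers n ≥ 1 and N ≥ 0, the monomial X₁·X₂⋯Xₙ divides the polynomial ∑_{S ⊆ {1,…,n}} (−1)^{|S|} · (∑_{i ∈ S} X_i)^N in ℤ[X₁,…,Xₙ]. (This is the divisibility ensuring that the vertex weight W_g(w) = (∏᷈ᵢ wᵢ)^{-1}·(∑_{S}(−1)^{|S|} w_S^{n+2g−2})·(−1)^{n+g−1}/(n+2g−2)! is a polynomial in w.) -/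
open MvPolynomial

/-! Pairing `S` with `insert j S` for `j ∉ S`, each pair contributes a multiple of
`(a + x j) ^ N - a ^ N`, hence of `x j`; so every variable divides the alternating sum, and
since the variables are pairwise non-associated primes, so does their product. -/

theorem Finset.prod_dvd_of_prime_of_forall_dvd {M₀ ι : Type*} [CommMonoidWithZero M₀]
    [IsCancelMulZero M₀] [DecidableEq ι] {s : Finset ι} {p : ι → M₀}
    (hp : ∀ i ∈ s, Prime (p i)) (hinj : ∀ i ∈ s, ∀ j ∈ s, p i ∣ p j → i = j)
    {a : M₀} (hdvd : ∀ i ∈ s, p i ∣ a) :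
    ∏ i ∈ s, p i ∣ a := by
  induction s using Finset.induction_on with
  | empty => simp
  | insert j t hjt ih =>
    have ht : ∀ i ∈ t, i ∈ insert j t := fun i hi => Finset.mem_insert_of_mem hi
    have hj := Finset.mem_insert_self j t
    obtain ⟨b, rfl⟩ := ih (fun i hi => hp i (ht i hi))
      (fun i hi k hk => hinj i (ht i hi) k (ht k hk)) (fun i hi => hdvd i (ht i hi))
    have hpj_not_dvd : ¬ p j ∣ ∏ i ∈ t, p i := fun h => by
      obtain ⟨i, hi, hji⟩ := ((hp j hj).dvd_finsetProd_iff _).mp h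
      exact hjt (hinj j hj i (ht i hi) hji ▸ hi)
    obtain ⟨c, rfl⟩ := ((hp j hj).dvd_or_dvd (hdvd j hj)).resolve_left hpj_not_dvd
    rw [Finset.prod_insert hjt]
    exact ⟨c, by ac_rfl⟩

theorem dvd_sum_powerset_neg_one_pow_mul_sum_pow {R ι : Type*} [CommRing R] [DecidableEq ι]
    {s : Finset ι} (x : ι → R) (N : ℕ) {j : ι} (hj : j ∈ s) :
    x j ∣ ∑ S ∈ s.powerset, (-1 : R) ^ S.card * (∑ i ∈ S, x i) ^ N := by
  rw [← Finset.insert_erase hj, Finset.sum_powerset_insert (Finset.notMem_erase j s),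
    ← Finset.sum_add_distrib]
  refine Finset.dvd_sum fun S hS => ?_
  have hjS : j ∉ S := fun h => Finset.notMem_erase j s (Finset.mem_powerset.mp hS h)
  set a := ∑ i ∈ S, x i
  have hpair :
      (-1 : R) ^ S.card * a ^ N + (-1) ^ (insert j S).card * (∑ i ∈ insert j S, x i) ^ N =
        -(-1) ^ S.card * ((x j + a) ^ N - a ^ N) := by
    rw [Finset.card_insert_of_notMem hjS, Finset.sum_insert hjS, pow_succ]
    ring
  rw [hpair]
  exact (add_sub_cancel_right (x j) a ▸ sub_dvd_pow_sub_pow (x j + a) a N).mul_left _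

theorem statement18_general (n N : ℕ) :
    (∏ i : Fin n, (X i : MvPolynomial (Fin n) ℤ)) ∣
      ∑ S : Finset (Fin n),
        (-1 : MvPolynomial (Fin n) ℤ) ^ S.card * (∑ i ∈ S, X i) ^ N := by
  refine Finset.prod_dvd_of_prime_of_forall_dvd (fun i _ => X_prime)
    (fun i _ j _ => X_dvd_X.mp) fun j hj => ?_
  simpa only [Finset.powerset_univ] using dvd_sum_powerset_neg_one_pow_mul_sum_pow X N hj

/-- For all `n ≥ 1` and `N ≥ 0`, the monomial `X₁·X₂⋯Xₙ` divides
`∑_{S ⊆ {1,…,n}} (−1)^{|S|} · (∑_{i ∈ S} X_i)^N` in `ℤ[X₁,…,Xₙ]`. -/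
theorem statement18 (n N : ℕ) (hn : 1 ≤ n) :
    (∏ i : Fin n, (X i : MvPolynomial (Fin n) ℤ)) ∣
      ∑ S : Finset (Fin n),
        (-1 : MvPolynomial (Fin n) ℤ) ^ S.card * (∑ i ∈ S, X i) ^ N :=
  statement18_general n N
end

section
/- Let r ≥ 1 and let φ be a ℚ-multilinear map in 2r arguments from ℚ² to ℚ (φ : MultilinearMap over Fin (2r) copies of ℚ² with values in ℚ) which is invariant under the diagonal action of SL₂(ℤ): φ(A·x₁, …, A·x_{2r}) = φ(x₁, …, x_{2r}) for every A ∈ SL₂(ℤ) and all x₁,…,x_{2r} ∈ ℚ². Then for every 2×2 matrix M with rational entries and all x₁,…,x_{2r} ∈ ℚ²: φ(M·x₁, …, M·x_{2r}) = (det M)^r · φ(x₁, …, x_{2r}). -/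
/-!
The matrices `A` with `φ (A x₁, …, A x_{2r}) = (det A)^r φ (x₁, …, x_{2r})` form a submonoid of
`M₂(ℚ)`. Along any affine line `t ↦ A + t B` both sides are polynomials in `t`, so membership on
infinitely many points of the line gives membership on all of it. This upgrades the integer
transvections to all rational ones, and then, via `diag(1, c²) = c • diag(c⁻¹, c)`, the squares to
all diagonal matrices `diag(1, d)` and finally all of `diag(a, b)`. Gaussian elimination writes
every matrix as transvections times a diagonal matrix times transvections.
-/

open Polynomial Matrix

namespace MultilinearMap

section Line

variable {R ι : Type*} {M : ι → Type*} [CommRing R] [Fintype ι] [DecidableEq ι]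
  [∀ i, AddCommMonoid (M i)] [∀ i, Module R (M i)]

noncomputable def linePoly (f : MultilinearMap R M R) (u v : ∀ i, M i) : R[X] :=
  ∑ s : Finset ι, C (f (s.piecewise v u)) * X ^ s.card

theorem eval_linePoly (f : MultilinearMap R M R) (u v : ∀ i, M i) (t : R) :
    (f.linePoly u v).eval t = f (u + t • v) := by
  rw [add_comm, f.map_add_univ, linePoly, eval_finsetSum]
  refine Finset.sum_congr rfl fun s _ => ?_
  have hpiece : s.piecewise (t • v) u =
      s.piecewise (fun i => t • s.piecewise v u i) (s.piecewise v u) := by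
    ext i; by_cases hi : i ∈ s <;> simp [hi]
  rw [hpiece, f.map_piecewise_smul, Finset.prod_const, smul_eq_mul, eval_mul, eval_C, eval_pow,
    eval_X, mul_comm]

theorem apply_add_smul_eq_eval_of_infinite [IsDomain R] (f : MultilinearMap R M R)
    (u v : ∀ i, M i) (q : R[X]) (h : {t | f (u + t • v) = q.eval t}.Infinite) (t : R) :
    f (u + t • v) = q.eval t := by
  rw [← eval_linePoly, eq_of_infinite_eval_eq (f.linePoly u v) q (by simpa only [eval_linePoly])]

end Line

section Semiinvariants

variable {K ι m : Type*} [Field K] [Fintype m] [DecidableEq m]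
  (φ : MultilinearMap K (fun _ : ι => m → K) K)

def semiinvariants (r : ℕ) : Submonoid (Matrix m m K) where
  carrier := {A | ∀ x : ι → m → K, φ (fun i => A *ᵥ x i) = A.det ^ r * φ x}
  one_mem' x := by simp
  mul_mem' {A B} hA hB x := by
    simp only [Set.mem_ofPred_eq, ← mulVec_mulVec, det_mul, mul_pow] at *
    rw [hA, hB, mul_assoc]

variable {φ} [Fintype ι] {r : ℕ}

theorem add_smul_mem_semiinvariants_of_infinite [DecidableEq ι] (A B : Matrix m m K)
    (h : {t : K | A + t • B ∈ φ.semiinvariants r}.Infinite) (t : K) :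
    A + t • B ∈ φ.semiinvariants r := by
  set q : K[X] := det (A.map C + (X : K[X]) • B.map C)
  have hdet (s : K) : (A + s • B).det = q.eval s := by
    rw [← coe_evalRingHom, RingHom.map_det]
    congr 1
    ext i j
    simp only [RingHom.mapMatrix_apply, map_apply, Matrix.add_apply, Matrix.smul_apply,
      coe_evalRingHom, eval_add, eval_C, smul_eq_mul, eval_mul, eval_X]
  have hline (s : K) (x : ι → m → K) :
      (fun i => (A + s • B) *ᵥ x i) = (fun i => A *ᵥ x i) + s • fun i => B *ᵥ x i := by
    ext i : 1
    simp only [add_mulVec, smul_mulVec, Pi.add_apply, Pi.smul_apply]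
  intro x
  have key := φ.apply_add_smul_eq_eval_of_infinite (fun i => A *ᵥ x i) (fun i => B *ᵥ x i)
    (q ^ r * C (φ x)) (h.mono fun s hs => by simp [← hline, hs x, hdet]) t
  simpa [← hline, hdet] using key

theorem transvection_mem_semiinvariants [DecidableEq ι] [CharZero K]
    (hφ : ∀ (A : SpecialLinearGroup m ℤ) (x : ι → m → K),
      φ (fun i => ((A : Matrix m m ℤ).map (Int.cast : ℤ → K)) *ᵥ x i) = φ x)
    {i j : m} (hij : i ≠ j) (c : K) : transvection i j c ∈ φ.semiinvariants r := by
  have hline (t : K) : transvection i j t = 1 + t • single i j 1 := by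
    rw [transvection, smul_single, smul_eq_mul, mul_one]
  rw [hline]
  refine add_smul_mem_semiinvariants_of_infinite _ _
    (Set.infinite_of_injective_forall_mem Int.cast_injective fun k => ?_) c
  rw [Set.mem_ofPred_eq, ← hline]
  intro x
  have hmap : (transvection i j k).map (Int.cast : ℤ → K) = transvection i j (k : K) := by
    ext a b
    by_cases ha : a = b <;> simp [transvection, single, one_apply, ha]
  simpa [det_transvection_of_ne _ _ hij, hmap] using
    hφ ⟨transvection i j k, det_transvection_of_ne _ _ hij k⟩ x

theorem smul_one_mem_semiinvariants (hcard : Fintype.card ι = Fintype.card m * r) (c : K) :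
    c • (1 : Matrix m m K) ∈ φ.semiinvariants r := by
  intro x
  simp only [smul_mulVec, one_mulVec, φ.map_smul_univ, Finset.prod_const, Finset.card_univ,
    hcard, det_smul, det_one, mul_one, pow_mul, smul_eq_mul]

end Semiinvariants

end MultilinearMap

namespace Matrix

variable {K : Type*} [Field K]

theorem mem_of_transvection_mem_of_diagonal_mem {n : Type*} [Fintype n] [DecidableEq n]
    {S : Submonoid (Matrix n n K)} (hT : ∀ t : TransvectionStruct n K, t.toMatrix ∈ S)
    (hD : ∀ d : n → K, diagonal d ∈ S) (M : Matrix n n K) : M ∈ S := by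
  obtain ⟨L, L', d, rfl⟩ := Pivot.exists_list_transvec_mul_diagonal_mul_list_transvec M
  have hL (L : List (TransvectionStruct n K)) : (L.map TransvectionStruct.toMatrix).prod ∈ S :=
    S.list_prod_mem (by simpa using fun t _ => hT t)
  exact mul_mem (mul_mem (hL L) (hD d)) (hL L')

theorem diagonal_inv_mem_of_transvection_mem {S : Submonoid (Matrix (Fin 2) (Fin 2) K)}
    (hT : ∀ c : K, transvection 0 1 c ∈ S ∧ transvection 1 0 c ∈ S) {s : K} (hs : s ≠ 0) :
    diagonal ![s, s⁻¹] ∈ S := by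
  have hfactor : diagonal ![s, s⁻¹] = transvection 1 0 ((1 - s) / s) * transvection 0 1 1 *
      transvection 1 0 (s - 1) * transvection 0 1 (-1 / s) := by
    ext i j
    fin_cases i <;> fin_cases j <;> simp [transvection, mul_apply, Fin.sum_univ_two, one_apply] <;>
      field_simp <;> ring
  rw [hfactor]
  exact mul_mem (mul_mem (mul_mem (hT _).2 (hT _).1) (hT _).2) (hT _).1

end Matrix

namespace MultilinearMap

variable {K ι : Type*} [Field K] [CharZero K] [Fintype ι] [DecidableEq ι] {r : ℕ}
  {φ : MultilinearMap K (fun _ : ι => Fin 2 → K) K}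

theorem diagonal_one_mem_semiinvariants (hcard : Fintype.card ι = 2 * r)
    (hT : ∀ c : K, transvection 0 1 c ∈ φ.semiinvariants r ∧
      transvection 1 0 c ∈ φ.semiinvariants r) (d : K) :
    diagonal ![1, d] ∈ φ.semiinvariants r := by
  have hline (t : K) : diagonal ![1, t] = diagonal ![1, 0] + t • diagonal ![0, 1] := by
    ext i j; fin_cases i <;> fin_cases j <;> simp
  -- `diag(c⁻¹, c)` is a product of transvections and `c • 1` scales `φ` by `c ^ (2 * r)`.
  have hsq (c : K) (hc : c ≠ 0) : diagonal ![1, c ^ 2] = c • 1 * diagonal ![c⁻¹, c⁻¹⁻¹] := by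
    ext i j; fin_cases i <;> fin_cases j <;> simp [hc, sq]
  have hinj : Function.Injective fun k : ℕ => ((k : K) + 1) ^ 2 := fun k l h => by
    have hnat : (k + 1) ^ 2 = (l + 1) ^ 2 := Nat.cast_injective (R := K) (by push_cast; exact h)
    simpa using Nat.pow_left_injective two_ne_zero hnat
  rw [hline]
  refine add_smul_mem_semiinvariants_of_infinite _ _
    (Set.infinite_of_injective_forall_mem hinj fun k => ?_) d
  have hk : (k : K) + 1 ≠ 0 := Nat.cast_add_one_ne_zero k
  rw [Set.mem_ofPred_eq, ← hline, hsq _ hk]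
  exact mul_mem (smul_one_mem_semiinvariants (by simpa using hcard) _)
    (diagonal_inv_mem_of_transvection_mem hT (inv_ne_zero hk))

theorem diagonal_mem_semiinvariants (hcard : Fintype.card ι = 2 * r)
    (hT : ∀ c : K, transvection 0 1 c ∈ φ.semiinvariants r ∧
      transvection 1 0 c ∈ φ.semiinvariants r) (d : Fin 2 → K) :
    diagonal d ∈ φ.semiinvariants r := by
  have hd : d = ![d 0, d 1] := by ext i; fin_cases i <;> rfl
  have hline (t : K) : diagonal ![t, d 1] = diagonal ![0, d 1] + t • diagonal ![1, 0] := by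
    ext i j; fin_cases i <;> fin_cases j <;> simp
  have hunit (a : K) (ha : a ≠ 0) :
      diagonal ![a, d 1] = diagonal ![a, a⁻¹] * diagonal ![1, a * d 1] := by
    ext i j; fin_cases i <;> fin_cases j <;> simp [ha]
  rw [hd, hline]
  refine add_smul_mem_semiinvariants_of_infinite _ _
    ((Set.finite_singleton 0).infinite_compl.mono fun a ha => ?_) (d 0)
  rw [Set.mem_ofPred_eq, ← hline, hunit a ha]
  exact mul_mem (diagonal_inv_mem_of_transvection_mem hT ha)
    (diagonal_one_mem_semiinvariants hcard hT _)

end MultilinearMap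

theorem statement19_general (r : ℕ)
    (φ : MultilinearMap ℚ (fun _ : Fin (2 * r) => (Fin 2 → ℚ)) ℚ)
    (hφ : ∀ (A : Matrix.SpecialLinearGroup (Fin 2) ℤ)
        (x : Fin (2 * r) → Fin 2 → ℚ),
      φ (fun i => ((A : Matrix (Fin 2) (Fin 2) ℤ).map (Int.cast : ℤ → ℚ)).mulVec (x i)) = φ x) :
    ∀ (M : Matrix (Fin 2) (Fin 2) ℚ) (x : Fin (2 * r) → Fin 2 → ℚ),
      φ (fun i => M.mulVec (x i)) = M.det ^ r * φ x := by
  have hT (c : ℚ) : transvection 0 1 c ∈ φ.semiinvariants r ∧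
      transvection 1 0 c ∈ φ.semiinvariants r :=
    ⟨φ.transvection_mem_semiinvariants hφ zero_ne_one c,
      φ.transvection_mem_semiinvariants hφ one_ne_zero c⟩
  exact mem_of_transvection_mem_of_diagonal_mem
    (fun t => φ.transvection_mem_semiinvariants hφ t.hij t.c)
    (MultilinearMap.diagonal_mem_semiinvariants (Fintype.card_fin _) hT)

/-- Let `φ` be a ℚ-multilinear map in `2r` arguments from `ℚ²` to `ℚ` which is
invariant under the diagonal action of `SL₂(ℤ)`.  Then for every `2×2` rational
matrix `M`, `φ(M·x₁, …, M·x_{2r}) = (det M)^r · φ(x₁, …, x_{2r})`. -/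
theorem statement19 (r : ℕ) (hr : 1 ≤ r)
    (φ : MultilinearMap ℚ (fun _ : Fin (2 * r) => (Fin 2 → ℚ)) ℚ)
    (hφ : ∀ (A : Matrix.SpecialLinearGroup (Fin 2) ℤ)
        (x : Fin (2 * r) → Fin 2 → ℚ),
      φ (fun i => ((A : Matrix (Fin 2) (Fin 2) ℤ).map (Int.cast : ℤ → ℚ)).mulVec (x i)) = φ x) :
    ∀ (M : Matrix (Fin 2) (Fin 2) ℚ) (x : Fin (2 * r) → Fin 2 → ℚ),
      φ (fun i => M.mulVec (x i)) = M.det ^ r * φ x :=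
  statement19_general r φ hφ
end
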